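/- Cribbing example computation (Section V). Let X1, X2 be independent uniform bits, and define Y = X1 if X2 = 1 and Y = 'e' if X2 = 0. Set U2 = X2 and U1 = X1 if U2 = 1, U1 = 0 if U2 = 0. Then: (i) I(U1;X1|X2) = 1/2 bit; (ii) I(U1;X1|U2) + I(U2;X2) = 3/2 bits; (iii) I(U1;X1,X2,Y) − I(U1;U2) = 1/2 bit; and Y is a deterministic function of (U1,U2). In particular, with cribbing, secure channel simulation for this example is feasible with H(X̃1,X̃2) = 3/2 and R01 = 1/2, strictly improving on the optimal requirements H(X̃1,X̃2) ≥ 2 and R01 ≥ 1 without cribbing. -/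
import Mathlib


open scoped BigOperators

namespace SecCoord

/-- `p` is a probability mass function on the finite type `α`. -/
def IsPMF {α : Type*} [Fintype α] (p : α → ℝ) : Prop :=
  (∀ a, 0 ≤ p a) ∧ ∑ a, p a = 1

/-- Total variation distance between two pmfs: half the `ℓ¹`-distance. -/
noncomputable def TV {α : Type*} [Fintype α] (p q : α → ℝ) : ℝ :=
  (1 / 2) * ∑ a, |p a - q a|

/-- Distribution (pushforward pmf) of a random variable `X : Ω → α` under `μ`. -/
noncomputable def dist {Ω α : Type*} [Fintype Ω] (μ : Ω → ℝ) (X : Ω → α) : α → ℝ :=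
  fun a => ∑ ω, Set.indicator {ω' | X ω' = a} μ ω

/-- Shannon entropy (in bits) of the random variable `X` under `μ`. -/
noncomputable def H {Ω α : Type*} [Fintype Ω] [Fintype α] (μ : Ω → ℝ) (X : Ω → α) : ℝ :=
  -∑ a, dist μ X a * Real.logb 2 (dist μ X a)

/-- Conditional Shannon entropy `H(X | Z)` (in bits). -/
noncomputable def condEnt {Ω α β : Type*} [Fintype Ω] [Fintype α] [Fintype β]
    (μ : Ω → ℝ) (X : Ω → α) (Z : Ω → β) : ℝ :=
  H μ (fun ω => (X ω, Z ω)) - H μ Z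

/-- Mutual information `I(X; Y)` (in bits). -/
noncomputable def MI {Ω α β : Type*} [Fintype Ω] [Fintype α] [Fintype β]
    (μ : Ω → ℝ) (X : Ω → α) (Y : Ω → β) : ℝ :=
  H μ X + H μ Y - H μ (fun ω => (X ω, Y ω))

/-- Conditional mutual information `I(X; Y | Z)` (in bits). -/
noncomputable def CMI {Ω α β γ : Type*} [Fintype Ω] [Fintype α] [Fintype β] [Fintype γ]
    (μ : Ω → ℝ) (X : Ω → α) (Y : Ω → β) (Z : Ω → γ) : ℝ :=
  (H μ (fun ω => (X ω, Z ω))) + (H μ (fun ω => (Y ω, Z ω)))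
    - (H μ (fun ω => (X ω, Y ω, Z ω))) - H μ Z

section CribExample

/-- Uniform distribution on the two source bits `(X1, X2)` of Example 1. -/
noncomputable def unifEx : Bool × Bool → ℝ := fun _ => (1 / 4 : ℝ)

/-- The auxiliary choice `U1` of the cribbing scheme: `U1 = X1` if `X2 = 1`,
`U1 = 0` if `X2 = 0`. -/
def exU1 : Bool × Bool → Bool := fun ω => if ω.2 then ω.1 else false

/-- The simulated output: `Y = X1` if `X2 = 1` and `Y = 'e'` (`none`) if `X2 = 0`. -/
def exY : Bool × Bool → Option Bool := fun ω => if ω.2 then some ω.1 else none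

lemma lb2 : Real.logb 2 (1/2 : ℝ) = -1 := by
  rw [show (1/2:ℝ) = 2⁻¹ by norm_num, Real.logb_inv, Real.logb_self_eq_one] <;> norm_num

lemma lb4 : Real.logb 2 (1/4 : ℝ) = -2 := by
  rw [show (1/4:ℝ) = ((2:ℝ)^(2:ℕ))⁻¹ by norm_num, Real.logb_inv, Real.logb_pow,
    Real.logb_self_eq_one] <;> norm_num

/-- **Cribbing example computation (Section V).**  With `X1, X2` independent uniform
bits, `U2 = X2`, `U1 = X1·1{X2 = 1}` and `Y` the erasure output:
(i) `I(U1; X1 | X2) = 1/2`; (ii) `I(U1; X1 | U2) + I(U2; X2) = 3/2`;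
(iii) `I(U1; X1, X2, Y) − I(U1; U2) = 1/2`; and `Y` is a deterministic function of
`(U1, U2)`.  In particular, with cribbing the example is achievable with
`H(X̃1, X̃2) = 3/2` and `R01 = 1/2`, strictly below the optimal requirements
`H(X̃1, X̃2) ≥ 2`, `R01 ≥ 1` without cribbing. -/
theorem crib_example_computation :
    CMI unifEx exU1 (fun ω => ω.1) (fun ω => ω.2) = 1 / 2 ∧
    CMI unifEx exU1 (fun ω => ω.1) (fun ω => ω.2) + MI unifEx (fun ω => ω.2) (fun ω => ω.2)
      = 3 / 2 ∧
    MI unifEx exU1 (fun ω => (ω.1, ω.2, exY ω)) - MI unifEx exU1 (fun ω => ω.2)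
      = 1 / 2 ∧
    (∃ g : Bool × Bool → Option Bool, ∀ ω, exY ω = g (exU1 ω, ω.2)) ∧
    (3 / 2 : ℝ) < 2 ∧ (1 / 2 : ℝ) < 1 := by
  refine ⟨?_, ?_, ?_, ⟨fun p => if p.2 then some p.1 else none, ?_⟩, by norm_num, by norm_num⟩
  · simp only [CMI, MI, H, dist, unifEx, exU1, exY, Fintype.sum_prod_type, Fintype.sum_bool,
      Fintype.sum_option, Set.indicator_apply, Set.mem_setOf_eq]
    norm_num [lb4, lb2]
  · simp only [CMI, MI, H, dist, unifEx, exU1, exY, Fintype.sum_prod_type, Fintype.sum_bool,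
      Fintype.sum_option, Set.indicator_apply, Set.mem_setOf_eq]
    norm_num [lb4, lb2]
  · simp only [CMI, MI, H, dist, unifEx, exU1, exY, Fintype.sum_prod_type, Fintype.sum_bool,
      Fintype.sum_option, Set.indicator_apply, Set.mem_setOf_eq,
      Option.some.injEq, reduceCtorEq]
    norm_num [lb4, lb2]
    ring
  · rintro ⟨x1, x2⟩
    cases x2 <;> simp [exY, exU1]

end CribExample

end SecCoord
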